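/- arXiv:1907.09034 — 4 statements merged into one kernel-verified Lean document; each statement's English description precedes it below -/
import Mathlib

section
/- Let χ : ℝ → ℝ be twice continuously differentiable near 0 with χ(0) = 0 and χ'(0) = 0, write χ'' := χ''(0), and let u⁺, u⁻ : ℝ² → ℝ be twice continuously differentiable near the origin. Let a⁺ = (a_ij⁺), a⁻ = (a_ij⁻) be constant symmetric 2×2 matrices with a₁₁⁺ ≠ 0, set [a_ij] := a_ij⁺ − a_ij⁻, let w(s) := u⁺(χ(s),s) − u⁻(χ(s),s), and suppose the flux jump at s = 0 is v, i.e. (a₁₁⁺ u_ξ⁺ + a₁₂⁺ u_η⁺) − (a₁₁⁻ u_ξ⁻ + a₁₂⁻ u_η⁻) = v, where all one-sided derivatives are evaluated at the origin. Then u_ηη⁺ = χ'' ([a₁₁]/a₁₁⁺) u_ξ⁻ + χ'' ([a₁₂]/a₁₁⁺) u_η⁻ + u_ηη⁻ − (χ''/a₁₁⁺) v + χ'' (a₁₂⁺/a₁₁⁺) w'(0) + w''(0). -/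
open Real Filter Topology

/-- Partial derivative with respect to the first coordinate (`ξ`). -/
noncomputable def pd1 (u : ℝ × ℝ → ℝ) (p : ℝ × ℝ) : ℝ := fderiv ℝ u p (1, 0)

/-- Partial derivative with respect to the second coordinate (`η`). -/
noncomputable def pd2 (u : ℝ × ℝ → ℝ) (p : ℝ × ℝ) : ℝ := fderiv ℝ u p (0, 1)

lemma key (χ : ℝ → ℝ) (hχ : ContDiffAt ℝ 2 χ 0)
    (hχ0 : χ 0 = 0) (hχ'0 : deriv χ 0 = 0)
    (u : ℝ × ℝ → ℝ) (hu : ContDiffAt ℝ 2 u (0, 0)) :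
    deriv (fun s => u (χ s, s)) 0 = pd2 u (0, 0) ∧
    deriv (deriv (fun s => u (χ s, s))) 0
      = pd2 (pd2 u) (0, 0) + deriv (deriv χ) 0 * pd1 u (0, 0) := by
  have hχev : ∀ᶠ s in 𝓝 (0:ℝ), DifferentiableAt ℝ χ s := by
    filter_upwards [hχ.eventually (by simp)] with s hs
    exact hs.differentiableAt two_ne_zero
  have huev : ∀ᶠ p in 𝓝 ((0:ℝ), (0:ℝ)), DifferentiableAt ℝ u p := by
    filter_upwards [hu.eventually (by simp)] with p hp
    exact hp.differentiableAt two_ne_zero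
  have hγc : ContinuousAt (fun s : ℝ => (χ s, s)) 0 :=
    ((hχ.continuousAt).prodMk continuousAt_id)
  have hγt : Filter.Tendsto (fun s : ℝ => (χ s, s)) (𝓝 0) (𝓝 ((0:ℝ), (0:ℝ))) := by
    have := hγc.tendsto
    rwa [hχ0] at this
  have huev' : ∀ᶠ s in 𝓝 (0:ℝ), DifferentiableAt ℝ u (χ s, s) :=
    hγt.eventually huev
  have hder : ∀ᶠ s in 𝓝 (0:ℝ),
      HasDerivAt (fun t => u (χ t, t)) (fderiv ℝ u (χ s, s) (deriv χ s, 1)) s := by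
    filter_upwards [hχev, huev'] with s hχs hus
    have hγ : HasDerivAt (fun t : ℝ => (χ t, t)) (deriv χ s, 1) s :=
      (hχs.hasDerivAt).prodMk (hasDerivAt_id s)
    exact HasFDerivAt.comp_hasDerivAt (l := u) (f := fun t : ℝ => (χ t, t)) s
      hus.hasFDerivAt hγ
  have hEq : deriv (fun t => u (χ t, t)) =ᶠ[𝓝 (0:ℝ)]
      (fun s => fderiv ℝ u (χ s, s) (deriv χ s, 1)) := by
    filter_upwards [hder] with s hs using hs.deriv
  constructor
  · rw [hEq.self_of_nhds]
    simp only [hχ0, hχ'0]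
    rfl
  · rw [hEq.deriv_eq]
    have hF' : DifferentiableAt ℝ (fderiv ℝ u) (0, 0) :=
      (hu.fderiv_right (m := 1) (by norm_num)).differentiableAt one_ne_zero
    have hγ0' : HasDerivAt (fun s : ℝ => (χ s, s)) ((0:ℝ), (1:ℝ)) 0 := by
      have := ((hχ.differentiableAt two_ne_zero).hasDerivAt).prodMk (hasDerivAt_id 0)
      rwa [hχ'0] at this
    have hF : HasDerivAt (fun s => fderiv ℝ u (χ s, s))
        (fderiv ℝ (fderiv ℝ u) (0, 0) (0, 1)) 0 :=
      HasFDerivAt.comp_hasDerivAt_of_eq (l := fderiv ℝ u) (f := fun s : ℝ => (χ s, s))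
        0 hF'.hasFDerivAt hγ0' (by simp [hχ0])
    have hχ'' : DifferentiableAt ℝ (deriv χ) 0 := by
      have h1 : DifferentiableAt ℝ (fderiv ℝ χ) 0 :=
        (hχ.fderiv_right (m := 1) (by norm_num)).differentiableAt one_ne_zero
      have heq : (deriv χ) = fun s => fderiv ℝ χ s 1 := rfl
      rw [heq]
      exact h1.clm_apply (differentiableAt_const _)
    have hψ : HasDerivAt (fun s => (deriv χ s, (1:ℝ))) ((deriv (deriv χ) 0), (0:ℝ)) 0 :=
      (hχ''.hasDerivAt).prodMk (hasDerivAt_const 0 1)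
    have hmain := hF.clm_apply hψ
    rw [hmain.deriv]
    have h1 : pd2 (pd2 u) (0, 0) = fderiv ℝ (fderiv ℝ u) (0, 0) (0, 1) (0, 1) := by
      have hc : HasFDerivAt
          ((ContinuousLinearMap.apply ℝ ℝ ((0:ℝ),(1:ℝ)) : (ℝ × ℝ →L[ℝ] ℝ) →L[ℝ] ℝ) ∘ fderiv ℝ u)
          ((ContinuousLinearMap.apply ℝ ℝ ((0:ℝ),(1:ℝ))).comp (fderiv ℝ (fderiv ℝ u) (0,0)))
          (0,0) :=
        (ContinuousLinearMap.apply ℝ ℝ ((0:ℝ),(1:ℝ))).hasFDerivAt.comp (0,0) hF'.hasFDerivAt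
      have h2 : fderiv ℝ (pd2 u) (0,0)
          = (ContinuousLinearMap.apply ℝ ℝ ((0:ℝ),(1:ℝ))).comp (fderiv ℝ (fderiv ℝ u) (0,0)) :=
        hc.fderiv
      show fderiv ℝ (pd2 u) (0,0) (0,1) = _
      rw [h2]
      rfl
    have h2 : fderiv ℝ u (0, 0) (deriv (deriv χ) 0, 0)
        = deriv (deriv χ) 0 * pd1 u (0, 0) := by
      have he : ((deriv (deriv χ) 0 : ℝ), (0:ℝ)) = deriv (deriv χ) 0 • ((1:ℝ), (0:ℝ)) := by simp
      rw [he, (fderiv ℝ u (0,0)).map_smul]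
      rfl
    simp only [hχ0, hχ'0]
    rw [h1, h2]

/-- the interface relation for the second tangential derivative,
`u_ηη⁺ = χ''([a₁₁]/a₁₁⁺) u_ξ⁻ + χ''([a₁₂]/a₁₁⁺) u_η⁻ + u_ηη⁻ − (χ''/a₁₁⁺) v
+ χ''(a₁₂⁺/a₁₁⁺) w'(0) + w''(0)`. -/
theorem stmt_7 (χ : ℝ → ℝ) (hχ : ContDiffAt ℝ 2 χ 0)
    (hχ0 : χ 0 = 0) (hχ'0 : deriv χ 0 = 0)
    (up um : ℝ × ℝ → ℝ)
    (hup : ContDiffAt ℝ 2 up (0, 0)) (hum : ContDiffAt ℝ 2 um (0, 0))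
    (a11p a12p a22p a11m a12m a22m : ℝ) (ha : a11p ≠ 0)
    (w : ℝ → ℝ) (hw : w = fun s => up (χ s, s) - um (χ s, s))
    (v : ℝ)
    (hflux : (a11p * pd1 up (0, 0) + a12p * pd2 up (0, 0))
      - (a11m * pd1 um (0, 0) + a12m * pd2 um (0, 0)) = v) :
    pd2 (pd2 up) (0, 0) =
      deriv (deriv χ) 0 * ((a11p - a11m) / a11p) * pd1 um (0, 0)
      + deriv (deriv χ) 0 * ((a12p - a12m) / a11p) * pd2 um (0, 0)
      + pd2 (pd2 um) (0, 0)
      - (deriv (deriv χ) 0 / a11p) * v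
      + deriv (deriv χ) 0 * (a12p / a11p) * deriv w 0
      + deriv (deriv w) 0 := by
  obtain ⟨hp1, hp2⟩ := key χ hχ hχ0 hχ'0 up hup
  obtain ⟨hm1, hm2⟩ := key χ hχ hχ0 hχ'0 um hum
  have hγ : ContDiffAt ℝ 2 (fun t : ℝ => ((χ t : ℝ), t)) 0 := hχ.prodMk contDiffAt_id
  have hup' : ContDiffAt ℝ 2 up ((fun t : ℝ => ((χ t : ℝ), t)) 0) := by
    simpa [hχ0] using hup
  have hum' : ContDiffAt ℝ 2 um ((fun t : ℝ => ((χ t : ℝ), t)) 0) := by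
    simpa [hχ0] using hum
  have h1 : ContDiffAt ℝ 2 (fun t : ℝ => up (χ t, t)) 0 :=
    ContDiffAt.comp (0:ℝ) hup' hγ
  have h2 : ContDiffAt ℝ 2 (fun t : ℝ => um (χ t, t)) 0 :=
    ContDiffAt.comp (0:ℝ) hum' hγ
  have hfev : ∀ᶠ s in 𝓝 (0:ℝ), DifferentiableAt ℝ (fun t => up (χ t, t)) s ∧
      DifferentiableAt ℝ (fun t => um (χ t, t)) s := by
    filter_upwards [h1.eventually (by simp), h2.eventually (by simp)] with s hs1 hs2
    exact ⟨hs1.differentiableAt two_ne_zero, hs2.differentiableAt two_ne_zero⟩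
  have hwEq : deriv w =ᶠ[𝓝 (0:ℝ)]
      fun s => deriv (fun t => up (χ t, t)) s - deriv (fun t => um (χ t, t)) s := by
    filter_upwards [hfev] with s hs
    rw [hw]
    exact deriv_sub hs.1 hs.2
  have hw1 : deriv w 0 = pd2 up (0,0) - pd2 um (0,0) := by
    rw [hwEq.self_of_nhds]
    simp only [hp1, hm1]
  have hw2 : deriv (deriv w) 0
      = (pd2 (pd2 up) (0,0) + deriv (deriv χ) 0 * pd1 up (0,0))
        - (pd2 (pd2 um) (0,0) + deriv (deriv χ) 0 * pd1 um (0,0)) := by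
    rw [hwEq.deriv_eq, ← hp2, ← hm2]
    have hd1 : DifferentiableAt ℝ (deriv (fun t => up (χ t, t))) 0 := by
      have := (h1.fderiv_right (m := 1) (by norm_num)).differentiableAt one_ne_zero
      have heq : deriv (fun t => up (χ t, t)) = fun s => fderiv ℝ (fun t => up (χ t, t)) s 1 := rfl
      rw [heq]
      exact this.clm_apply (differentiableAt_const _)
    have hd2 : DifferentiableAt ℝ (deriv (fun t => um (χ t, t))) 0 := by
      have := (h2.fderiv_right (m := 1) (by norm_num)).differentiableAt one_ne_zero
      have heq : deriv (fun t => um (χ t, t)) = fun s => fderiv ℝ (fun t => um (χ t, t)) s 1 := rfl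
      rw [heq]
      exact this.clm_apply (differentiableAt_const _)
    exact deriv_sub hd1 hd2
  subst hflux
  rw [hw1, hw2]
  field_simp
  ring
end

section
/- Let χ : ℝ → ℝ be twice continuously differentiable near 0 with χ(0) = 0 and χ'(0) = 0, write χ'' := χ''(0), and let u⁺, u⁻ : ℝ² → ℝ be twice continuously differentiable near the origin. Let a⁺ = (a_ij⁺), a⁻ = (a_ij⁻) be constant symmetric 2×2 matrices with a₁₁⁺ ≠ 0, set [a_ij] := a_ij⁺ − a_ij⁻. Let w(s) := u⁺(χ(s),s) − u⁻(χ(s),s) and define v(s) by √(1 + χ'(s)²) · v(s) = [(a₁₁ − χ'(s) a₁₂) u_ξ](s) + [(a₁₂ − χ'(s) a₂₂) u_η](s), and assume w is twice differentiable and v is differentiable at 0. Then, with all one-sided partial derivatives evaluated at the origin, u_ξη⁺ = χ'' ((a₁₁⁺ [a₁₂] − 2a₁₂⁺ [a₁₁])/(a₁₁⁺)²) u_ξ⁻ + χ'' ((a₁₁⁺ [a₂₂] − 2a₁₂⁺ [a₁₂])/(a₁₁⁺)²) u_η⁻ + (a₁₁⁻/a₁₁⁺) u_ξη⁻ − ([a₁₂]/a₁₁⁺)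 u_ηη⁻ + χ'' (2a₁₂⁺/(a₁₁⁺)²) v(0) + (1/a₁₁⁺) v'(0) + χ'' ((a₁₁⁺ a₂₂⁺ − 2(a₁₂⁺)²)/(a₁₁⁺)²) w'(0) − (a₁₂⁺/a₁₁⁺) w''(0). -/
open Real Filter Topology

/-- Chain rule along the curve `s ↦ (χ s, s)`. -/
lemma comp_curve_hasDerivAt {f : ℝ × ℝ → ℝ} {χ : ℝ → ℝ} {s : ℝ}
    (hf : DifferentiableAt ℝ f (χ s, s)) (hχ : DifferentiableAt ℝ χ s) :
    HasDerivAt (fun t => f (χ t, t))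
      (deriv χ s * pd1 f (χ s, s) + pd2 f (χ s, s)) s := by
  have hγ : HasDerivAt (fun t => ((χ t, t) : ℝ × ℝ)) (deriv χ s, 1) s :=
    (hχ.hasDerivAt).prodMk (hasDerivAt_id s)
  have h : HasDerivAt (f ∘ fun t => ((χ t, t) : ℝ × ℝ))
      (fderiv ℝ f (χ s, s) (deriv χ s, 1)) s :=
    hf.hasFDerivAt.comp_hasDerivAt_of_eq s hγ rfl
  convert h using 1
  · rfl
  have hvec : (deriv χ s, (1 : ℝ)) = deriv χ s • ((1 : ℝ), (0 : ℝ)) + ((0 : ℝ), (1 : ℝ)) := by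
    simp
  rw [hvec, map_add, map_smul]
  simp [pd1, pd2, smul_eq_mul]

/-- the interface relation for the mixed second derivative
`u_ξη⁺` across the interface, for piecewise constant coefficients. -/
theorem stmt_9 (χ : ℝ → ℝ) (hχ : ContDiffAt ℝ 2 χ 0)
    (hχ0 : χ 0 = 0) (hχ'0 : deriv χ 0 = 0)
    (up um : ℝ × ℝ → ℝ)
    (hup : ContDiffAt ℝ 2 up (0, 0)) (hum : ContDiffAt ℝ 2 um (0, 0))
    (a11p a12p a22p a11m a12m a22m : ℝ) (ha : a11p ≠ 0)
    (w : ℝ → ℝ) (hw : w = fun s => up (χ s, s) - um (χ s, s))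
    (v : ℝ → ℝ)
    (hv : ∀ s : ℝ, Real.sqrt (1 + deriv χ s ^ 2) * v s =
      ((a11p - deriv χ s * a12p) * pd1 up (χ s, s)
          - (a11m - deriv χ s * a12m) * pd1 um (χ s, s))
        + ((a12p - deriv χ s * a22p) * pd2 up (χ s, s)
          - (a12m - deriv χ s * a22m) * pd2 um (χ s, s)))
    (hw2 : DifferentiableAt ℝ w 0 ∧ DifferentiableAt ℝ (deriv w) 0)
    (hv1 : DifferentiableAt ℝ v 0) :
    pd2 (pd1 up) (0, 0) =
      deriv (deriv χ) 0
          * ((a11p * (a12p - a12m) - 2 * a12p * (a11p - a11m)) / a11p ^ 2)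
          * pd1 um (0, 0)
      + deriv (deriv χ) 0
          * ((a11p * (a22p - a22m) - 2 * a12p * (a12p - a12m)) / a11p ^ 2)
          * pd2 um (0, 0)
      + (a11m / a11p) * pd2 (pd1 um) (0, 0)
      - ((a12p - a12m) / a11p) * pd2 (pd2 um) (0, 0)
      + deriv (deriv χ) 0 * (2 * a12p / a11p ^ 2) * v 0
      + (1 / a11p) * deriv v 0
      + deriv (deriv χ) 0 * ((a11p * a22p - 2 * a12p ^ 2) / a11p ^ 2) * deriv w 0
      - (a12p / a11p) * deriv (deriv w) 0 := by
  -- abbreviations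
  set c := deriv (deriv χ) 0 with hc
  -- basic differentiability facts
  have hχd : DifferentiableAt ℝ χ 0 := hχ.differentiableAt (by norm_num)
  have hχ'cd : ContDiffAt ℝ 1 (deriv χ) 0 := by
    have h := hχ.fderiv_right (m := 1) (by norm_num)
    have h2 : ContDiffAt ℝ 1 (fun s => fderiv ℝ χ s 1) 0 := h.clm_apply contDiffAt_const
    have : (deriv χ) = fun s => fderiv ℝ χ s 1 := by
      funext s; rw [fderiv_apply_one_eq_deriv]
    rw [this]; exact h2
  have hχ'd : DifferentiableAt ℝ (deriv χ) 0 := hχ'cd.differentiableAt (by norm_num)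
  have hχ'' : HasDerivAt (deriv χ) c 0 := hχ'd.hasDerivAt
  -- first partials of up, um are differentiable at the origin
  have pd_diff : ∀ u : ℝ × ℝ → ℝ, ContDiffAt ℝ 2 u (0, 0) → ∀ e : ℝ × ℝ,
      DifferentiableAt ℝ (fun p => fderiv ℝ u p e) ((0 : ℝ), (0 : ℝ)) := by
    intro u hu e
    have h := hu.fderiv_right (m := 1) (by norm_num)
    exact (h.clm_apply contDiffAt_const).differentiableAt (by norm_num)
  have hpd1up : DifferentiableAt ℝ (pd1 up) ((0 : ℝ), (0 : ℝ)) := pd_diff up hup (1, 0)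
  have hpd2up : DifferentiableAt ℝ (pd2 up) ((0 : ℝ), (0 : ℝ)) := pd_diff up hup (0, 1)
  have hpd1um : DifferentiableAt ℝ (pd1 um) ((0 : ℝ), (0 : ℝ)) := pd_diff um hum (1, 0)
  have hpd2um : DifferentiableAt ℝ (pd2 um) ((0 : ℝ), (0 : ℝ)) := pd_diff um hum (0, 1)
  -- derivative at 0 of s ↦ f (χ s, s), using χ 0 = 0, χ' 0 = 0
  have comp0 : ∀ f : ℝ × ℝ → ℝ, DifferentiableAt ℝ f ((0 : ℝ), (0 : ℝ)) →
      HasDerivAt (fun t => f (χ t, t)) (pd2 f (0, 0)) 0 := by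
    intro f hf
    have hf' : DifferentiableAt ℝ f (χ 0, 0) := by rwa [hχ0]
    have h := comp_curve_hasDerivAt hf' hχd
    rw [hχ0, hχ'0] at h
    simpa using h
  -- the curve tends to the origin
  have hcurve : Filter.Tendsto (fun s => ((χ s, s) : ℝ × ℝ)) (𝓝 0) (𝓝 (0, 0)) := by
    have h1 : ContinuousAt (fun s => ((χ s, s) : ℝ × ℝ)) 0 :=
      (hχd.continuousAt).prodMk continuousAt_id
    have := h1.tendsto
    rwa [hχ0] at this
  -- eventually, up, um are differentiable at (χ s, s) and χ is differentiable at s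
  have hevup : ∀ᶠ s in 𝓝 (0 : ℝ), DifferentiableAt ℝ up (χ s, s) :=
    hcurve.eventually <| (hup.eventually (by norm_num)).mono
      fun p hp => hp.differentiableAt (by norm_num)
  have hevum : ∀ᶠ s in 𝓝 (0 : ℝ), DifferentiableAt ℝ um (χ s, s) :=
    hcurve.eventually <| (hum.eventually (by norm_num)).mono
      fun p hp => hp.differentiableAt (by norm_num)
  have hevχ : ∀ᶠ s in 𝓝 (0 : ℝ), DifferentiableAt ℝ χ s :=
    (hχ.eventually (by norm_num)).mono fun s hs => hs.differentiableAt (by norm_num)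
  -- formula for deriv w near 0
  have hderivw : ∀ᶠ s in 𝓝 (0 : ℝ), deriv w s =
      deriv χ s * (pd1 up (χ s, s) - pd1 um (χ s, s))
        + (pd2 up (χ s, s) - pd2 um (χ s, s)) := by
    filter_upwards [hevup, hevum, hevχ] with s h1 h2 h3
    have hp : HasDerivAt w
        ((deriv χ s * pd1 up (χ s, s) + pd2 up (χ s, s))
          - (deriv χ s * pd1 um (χ s, s) + pd2 um (χ s, s))) s := by
      rw [hw]
      exact (comp_curve_hasDerivAt h1 h3).sub (comp_curve_hasDerivAt h2 h3)
    rw [hp.deriv]; ring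
  -- notation for values at the origin
  set u1p := pd1 up ((0 : ℝ), (0 : ℝ)) with hu1p'
  set u1m := pd1 um ((0 : ℝ), (0 : ℝ)) with hu1m'
  set u2p := pd2 up ((0 : ℝ), (0 : ℝ)) with hu2p'
  set u2m := pd2 um ((0 : ℝ), (0 : ℝ)) with hu2m'
  set q12p := pd2 (pd1 up) ((0 : ℝ), (0 : ℝ)) with hq12p'
  set q12m := pd2 (pd1 um) ((0 : ℝ), (0 : ℝ)) with hq12m'
  set q22p := pd2 (pd2 up) ((0 : ℝ), (0 : ℝ)) with hq22p'
  set q22m := pd2 (pd2 um) ((0 : ℝ), (0 : ℝ)) with hq22m'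
  -- derivatives at 0 of composed first partials
  have hg1p : HasDerivAt (fun s => pd1 up (χ s, s)) q12p 0 := comp0 _ hpd1up
  have hg1m : HasDerivAt (fun s => pd1 um (χ s, s)) q12m 0 := comp0 _ hpd1um
  have hg2p : HasDerivAt (fun s => pd2 up (χ s, s)) q22p 0 := comp0 _ hpd2up
  have hg2m : HasDerivAt (fun s => pd2 um (χ s, s)) q22m 0 := comp0 _ hpd2um
  -- E2 : deriv w 0 = u2p - u2m
  have E2 : deriv w 0 = u2p - u2m := by
    have h := hderivw.self_of_nhds
    rw [hχ'0, hχ0] at h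
    simpa using h
  -- E3 : deriv (deriv w) 0 = c * (u1p - u1m) + (q22p - q22m)
  have E3 : deriv (deriv w) 0 = c * (u1p - u1m) + (q22p - q22m) := by
    have heq : deriv (deriv w) 0 = deriv (fun s =>
        deriv χ s * (pd1 up (χ s, s) - pd1 um (χ s, s))
          + (pd2 up (χ s, s) - pd2 um (χ s, s))) 0 :=
      Filter.EventuallyEq.deriv_eq hderivw
    have hF : HasDerivAt (fun s =>
        deriv χ s * (pd1 up (χ s, s) - pd1 um (χ s, s))
          + (pd2 up (χ s, s) - pd2 um (χ s, s)))
        ((c * ((pd1 up (χ 0, 0)) - (pd1 um (χ 0, 0)))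
            + deriv χ 0 * (q12p - q12m)) + (q22p - q22m)) 0 :=
      (hχ''.mul (hg1p.sub hg1m)).add (hg2p.sub hg2m)
    rw [heq, hF.deriv, hχ'0, hχ0]
    ring
  -- E1 : v 0 = a11p * u1p - a11m * u1m + (a12p * u2p - a12m * u2m)
  have E1 : v 0 = a11p * u1p - a11m * u1m + (a12p * u2p - a12m * u2m) := by
    have h := hv 0
    have hs1 : Real.sqrt (1 + (0 : ℝ) ^ 2) = 1 := by norm_num
    rw [hχ'0, hχ0, hs1, one_mul] at h
    linarith [h]
  -- the sqrt factor has derivative 0 at 0 and value 1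
  have hSd : HasDerivAt (fun s => Real.sqrt (1 + deriv χ s ^ 2)) 0 0 := by
    have hin : HasDerivAt (fun s => 1 + deriv χ s ^ 2)
        (0 + 2 * deriv χ 0 ^ 1 * c) 0 := (hasDerivAt_const 0 (1:ℝ)).add (hχ''.pow 2)
    have hout : HasDerivAt Real.sqrt (1 / (2 * Real.sqrt (1 + deriv χ 0 ^ 2)))
        (1 + deriv χ 0 ^ 2) := by
      apply Real.hasDerivAt_sqrt
      rw [hχ'0]; norm_num
    have h := hout.comp 0 hin
    have : (1 / (2 * Real.sqrt (1 + deriv χ 0 ^ 2))) * (0 + 2 * deriv χ 0 ^ 1 * c) = 0 := by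
      rw [hχ'0]; ring
    rwa [this] at h
  -- derivative of the right-hand side R of the flux relation at 0
  have hRd : HasDerivAt (fun s =>
      ((a11p - deriv χ s * a12p) * pd1 up (χ s, s)
          - (a11m - deriv χ s * a12m) * pd1 um (χ s, s))
        + ((a12p - deriv χ s * a22p) * pd2 up (χ s, s)
          - (a12m - deriv χ s * a22m) * pd2 um (χ s, s)))
      ((((0 - (c * a12p)) * pd1 up (χ 0, 0) + (a11p - deriv χ 0 * a12p) * q12p)
          - ((0 - (c * a12m)) * pd1 um (χ 0, 0) + (a11m - deriv χ 0 * a12m) * q12m))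
        + (((0 - (c * a22p)) * pd2 up (χ 0, 0) + (a12p - deriv χ 0 * a22p) * q22p)
          - ((0 - (c * a22m)) * pd2 um (χ 0, 0) + (a12m - deriv χ 0 * a22m) * q22m))) 0 := by
    have h1 : HasDerivAt (fun s => a11p - deriv χ s * a12p) (0 - c * a12p) 0 :=
      (hasDerivAt_const 0 a11p).sub (hχ''.mul_const a12p)
    have h2 : HasDerivAt (fun s => a11m - deriv χ s * a12m) (0 - c * a12m) 0 :=
      (hasDerivAt_const 0 a11m).sub (hχ''.mul_const a12m)
    have h3 : HasDerivAt (fun s => a12p - deriv χ s * a22p) (0 - c * a22p) 0 :=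
      (hasDerivAt_const 0 a12p).sub (hχ''.mul_const a22p)
    have h4 : HasDerivAt (fun s => a12m - deriv χ s * a22m) (0 - c * a22m) 0 :=
      (hasDerivAt_const 0 a12m).sub (hχ''.mul_const a22m)
    exact ((h1.mul hg1p).sub (h2.mul hg1m)).add ((h3.mul hg2p).sub (h4.mul hg2m))
  -- E4 : value of deriv v 0
  have E4 : deriv v 0 =
      (-(c * a12p) * u1p + a11p * q12p) - (-(c * a12m) * u1m + a11m * q12m)
        + ((-(c * a22p) * u2p + a12p * q22p) - (-(c * a22m) * u2m + a12m * q22m)) := by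
    have hSv : (fun s => Real.sqrt (1 + deriv χ s ^ 2) * v s) = (fun s =>
        ((a11p - deriv χ s * a12p) * pd1 up (χ s, s)
            - (a11m - deriv χ s * a12m) * pd1 um (χ s, s))
          + ((a12p - deriv χ s * a22p) * pd2 up (χ s, s)
            - (a12m - deriv χ s * a22m) * pd2 um (χ s, s))) := funext hv
    have hL : HasDerivAt (fun s => Real.sqrt (1 + deriv χ s ^ 2) * v s)
        (0 * v 0 + Real.sqrt (1 + deriv χ 0 ^ 2) * deriv v 0) 0 :=
      hSd.mul hv1.hasDerivAt
    have hR : HasDerivAt (fun s => Real.sqrt (1 + deriv χ s ^ 2) * v s)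
        ((((0 - (c * a12p)) * pd1 up (χ 0, 0) + (a11p - deriv χ 0 * a12p) * q12p)
            - ((0 - (c * a12m)) * pd1 um (χ 0, 0) + (a11m - deriv χ 0 * a12m) * q12m))
          + (((0 - (c * a22p)) * pd2 up (χ 0, 0) + (a12p - deriv χ 0 * a22p) * q22p)
            - ((0 - (c * a22m)) * pd2 um (χ 0, 0) + (a12m - deriv χ 0 * a22m) * q22m))) 0 := by
      rw [hSv]; exact hRd
    have huniq := hL.unique hR
    have hs1 : Real.sqrt (1 + (0 : ℝ) ^ 2) = 1 := by norm_num
    rw [hχ'0, hχ0, hs1] at huniq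
    linarith [huniq]
  -- now pure algebra: solve E1–E4 for q12p
  have hu2p : u2p = deriv w 0 + u2m := by linarith [E2]
  have hu1p : u1p = (v 0 + a11m * u1m - a12p * u2p + a12m * u2m) / a11p := by
    field_simp
    linarith [E1]
  have hq22p : q22p = deriv (deriv w) 0 - c * (u1p - u1m) + q22m := by linarith [E3]
  have hq12p : q12p = (deriv v 0 + c * a12p * u1p - c * a12m * u1m
      + c * a22p * u2p - c * a22m * u2m + a11m * q12m - a12p * q22p + a12m * q22m) / a11p := by
    field_simp
    linarith [E4]
  rw [hq12p, hq22p, hu1p, hu2p]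
  field_simp
  ring
end

section
/- Let χ : ℝ → ℝ be twice continuously differentiable near 0 with χ(0) = 0, χ'(0) = 0, write χ'' := χ''(0), and let u⁺, u⁻ : ℝ² → ℝ be twice continuously differentiable near the origin. Let a⁺ = (a_ij⁺), a⁻ = (a_ij⁻) be constant symmetric positive-definite 2×2 matrices (so a₁₁⁺ > 0), [a_ij] := a_ij⁺ − a_ij⁻, let w(s) := u⁺(χ(s),s) − u⁻(χ(s),s) be twice differentiable, define v(s) by √(1 + χ'(s)²) v(s) = [(a₁₁ − χ' a₁₂) u_ξ](s) + [(a₁₂ − χ' a₂₂) u_η](s) and assume v is differentiable at 0, and suppose the one-sided elliptic equations a₁₁± u_ξξ± + 2a₁₂± u_ξη± + a₂₂± u_ηη± − σ± u± = f± hold at the origin. Then, with all one-sided derivatives evaluated at the origin, u_ξξ⁺ = −S₁ χ'' u_ξ⁻ − S₂ χ'' u_η⁻ + (a₁₁⁻/a₁₁⁺) u_ξξ⁻ + (2(a₁₂⁺[a₁₁] − a₁₁⁺[a₁₂])/(a₁₁⁺)²) u_ξη⁻ + ((2a₁₂⁺[a₁₂] − a₁₁⁺[a₂₂])/(a₁₁⁺)²)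 u_ηη⁻ + [f]/a₁₁⁺ + ([σ]/a₁₁⁺) u⁻ + S₃, where S₁ = (2a₁₁⁺a₁₂⁺[a₁₂] − 4(a₁₂⁺)²[a₁₁] + a₁₁⁺a₂₂⁺[a₁₁])/(a₁₁⁺)³, S₂ = (2a₁₁⁺a₁₂⁺[a₂₂] − 4(a₁₂⁺)²[a₁₂] + a₁₁⁺a₂₂⁺[a₁₂])/(a₁₁⁺)³, and S₃ = −χ''((4(a₁₂⁺)² − a₁₁⁺a₂₂⁺)/(a₁₁⁺)³) v(0) − (2a₁₂⁺/(a₁₁⁺)²) v'(0) + (σ⁺/a₁₁⁺) w(0) − χ''((3a₁₁⁺a₁₂⁺a₂₂⁺ − 4(a₁₂⁺)³)/(a₁₁⁺)³) w'(0) + ((2(a₁₂⁺)² − a₁₁⁺a₂₂⁺)/(a₁₁⁺)²) w''(0). -/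
open Real Filter Topology Matrix

/-- Auxiliary: derivative along the interface curve of a directional derivative of
a `C²` function. -/
lemma pd_comp_hasDerivAt (u : ℝ × ℝ → ℝ) (hu : ContDiffAt ℝ 2 u (0, 0))
    (χ : ℝ → ℝ) (hχ0 : χ 0 = 0) (hχd : HasDerivAt χ 0 0) (vv : ℝ × ℝ) :
    HasDerivAt (fun s => fderiv ℝ u (χ s, s) vv)
      (fderiv ℝ (fun p => fderiv ℝ u p vv) (0, 0) (0, 1)) 0 := by
  have hD : DifferentiableAt ℝ (fderiv ℝ u) (0, 0) :=
    (hu.fderiv_right (m := 1) le_rfl).differentiableAt one_ne_zero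
  have hcurve : HasDerivAt (fun s => ((χ s, s) : ℝ × ℝ)) ((0 : ℝ), (1 : ℝ)) 0 :=
    hχd.prodMk (hasDerivAt_id 0)
  have hcomp : HasDerivAt (fun s => fderiv ℝ u (χ s, s))
      (fderiv ℝ (fderiv ℝ u) (0, 0) ((0 : ℝ), (1 : ℝ))) 0 :=
    hD.hasFDerivAt.comp_hasDerivAt_of_eq 0 hcurve (by simp [hχ0])
  have h2 := hcomp.clm_apply (hasDerivAt_const 0 vv)
  have h3 : fderiv ℝ (fun p => fderiv ℝ u p vv) (0, 0) (0, 1)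
      = fderiv ℝ (fderiv ℝ u) (0, 0) ((0 : ℝ), (1 : ℝ)) vv := by
    rw [fderiv_clm_apply hD (differentiableAt_const vv)]
    simp
  rw [h3]
  simpa using h2

/-- Auxiliary pure-algebra lemma combining the jump relations. -/
lemma stmt11_alg (a11p a12p a22p a11m a12m a22m σp σm fp fm k : ℝ)
    (X1p X2p Up Y11p Y21p Y22p X1m X2m Um Y11m Y21m Y22m w0 w1 w2 v0 v1 : ℝ)
    (ha : a11p ≠ 0)
    (F1 : v0 = a11p*X1p + a12p*X2p - a11m*X1m - a12m*X2m)
    (F2 : w0 = Up - Um)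
    (F3 : w1 = X2p - X2m)
    (F4 : w2 = k*(X1p - X1m) + Y22p - Y22m)
    (F5 : v1 = (-k*a12p*X1p + a11p*Y21p - k*a22p*X2p + a12p*Y22p)
             - (-k*a12m*X1m + a11m*Y21m - k*a22m*X2m + a12m*Y22m))
    (F6 : a11p*Y11p + 2*a12p*Y21p + a22p*Y22p - σp*Up = fp)
    (F7 : a11m*Y11m + 2*a12m*Y21m + a22m*Y22m - σm*Um = fm) :
    Y11p =
      -((2 * a11p * a12p * (a12p - a12m) - 4 * a12p ^ 2 * (a11p - a11m)
          + a11p * a22p * (a11p - a11m)) / a11p ^ 3) * k * X1m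
      - ((2 * a11p * a12p * (a22p - a22m) - 4 * a12p ^ 2 * (a12p - a12m)
          + a11p * a22p * (a12p - a12m)) / a11p ^ 3) * k * X2m
      + (a11m / a11p) * Y11m
      + (2 * (a12p * (a11p - a11m) - a11p * (a12p - a12m)) / a11p ^ 2) * Y21m
      + ((2 * a12p * (a12p - a12m) - a11p * (a22p - a22m)) / a11p ^ 2) * Y22m
      + (fp - fm) / a11p
      + ((σp - σm) / a11p) * Um
      + (-k * ((4 * a12p ^ 2 - a11p * a22p) / a11p ^ 3) * v0
          - (2 * a12p / a11p ^ 2) * v1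
          + (σp / a11p) * w0
          - k * ((3 * a11p * a12p * a22p - 4 * a12p ^ 3) / a11p ^ 3) * w1
          + ((2 * a12p ^ 2 - a11p * a22p) / a11p ^ 2) * w2) := by
  field_simp
  linear_combination ((k*(4*a12p^2 - a11p*a22p)) * F1 + (-a11p^2*σp) * F2
    + (k*(3*a11p*a12p*a22p - 4*a12p^3)) * F3 + (-a11p*(2*a12p^2 - a11p*a22p)) * F4
    + (2*a11p*a12p) * F5 + (a11p^2) * F6 + (-a11p^2) * F7)

/-- the interface relation for the second normal derivative
`u_ξξ⁺` across the interface for piecewise constant coefficients, obtained by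
combining the jump of the PDE with the other interface relations. -/
theorem stmt_11 (χ : ℝ → ℝ) (hχ : ContDiffAt ℝ 2 χ 0)
    (hχ0 : χ 0 = 0) (hχ'0 : deriv χ 0 = 0)
    (up um : ℝ × ℝ → ℝ)
    (hup : ContDiffAt ℝ 2 up (0, 0)) (hum : ContDiffAt ℝ 2 um (0, 0))
    (a11p a12p a22p a11m a12m a22m : ℝ)
    (hposp : (!![a11p, a12p; a12p, a22p] : Matrix (Fin 2) (Fin 2) ℝ).PosDef)
    (hposm : (!![a11m, a12m; a12m, a22m] : Matrix (Fin 2) (Fin 2) ℝ).PosDef)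
    (σp σm fp fm : ℝ)
    (w : ℝ → ℝ) (hw : w = fun s => up (χ s, s) - um (χ s, s))
    (v : ℝ → ℝ)
    (hv : ∀ s : ℝ, Real.sqrt (1 + deriv χ s ^ 2) * v s =
      ((a11p - deriv χ s * a12p) * pd1 up (χ s, s)
          - (a11m - deriv χ s * a12m) * pd1 um (χ s, s))
        + ((a12p - deriv χ s * a22p) * pd2 up (χ s, s)
          - (a12m - deriv χ s * a22m) * pd2 um (χ s, s)))
    (hw2 : DifferentiableAt ℝ w 0 ∧ DifferentiableAt ℝ (deriv w) 0)
    (hv1 : DifferentiableAt ℝ v 0)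
    (hpdep : a11p * pd1 (pd1 up) (0, 0) + 2 * a12p * pd2 (pd1 up) (0, 0)
      + a22p * pd2 (pd2 up) (0, 0) - σp * up (0, 0) = fp)
    (hpdem : a11m * pd1 (pd1 um) (0, 0) + 2 * a12m * pd2 (pd1 um) (0, 0)
      + a22m * pd2 (pd2 um) (0, 0) - σm * um (0, 0) = fm) :
    pd1 (pd1 up) (0, 0) =
      -((2 * a11p * a12p * (a12p - a12m) - 4 * a12p ^ 2 * (a11p - a11m)
          + a11p * a22p * (a11p - a11m)) / a11p ^ 3)
        * deriv (deriv χ) 0 * pd1 um (0, 0)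
      - ((2 * a11p * a12p * (a22p - a22m) - 4 * a12p ^ 2 * (a12p - a12m)
          + a11p * a22p * (a12p - a12m)) / a11p ^ 3)
        * deriv (deriv χ) 0 * pd2 um (0, 0)
      + (a11m / a11p) * pd1 (pd1 um) (0, 0)
      + (2 * (a12p * (a11p - a11m) - a11p * (a12p - a12m)) / a11p ^ 2)
          * pd2 (pd1 um) (0, 0)
      + ((2 * a12p * (a12p - a12m) - a11p * (a22p - a22m)) / a11p ^ 2)
          * pd2 (pd2 um) (0, 0)
      + (fp - fm) / a11p
      + ((σp - σm) / a11p) * um (0, 0)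
      + (-(deriv (deriv χ) 0) * ((4 * a12p ^ 2 - a11p * a22p) / a11p ^ 3) * v 0
          - (2 * a12p / a11p ^ 2) * deriv v 0
          + (σp / a11p) * w 0
          - deriv (deriv χ) 0
              * ((3 * a11p * a12p * a22p - 4 * a12p ^ 3) / a11p ^ 3) * deriv w 0
          + ((2 * a12p ^ 2 - a11p * a22p) / a11p ^ 2) * deriv (deriv w) 0) := by
  set k := deriv (deriv χ) 0 with hk
  -- positivity of a11p
  have hvne : (![1, 0] : Fin 2 → ℝ) ≠ 0 := by
    intro h
    have := congrFun h 0
    simp at this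
  have ha' := hposp.dotProduct_mulVec_pos hvne
  have ha : a11p ≠ 0 := by
    have : (0:ℝ) < a11p := by
      simpa [Matrix.mulVec, dotProduct, Fin.sum_univ_two] using ha'
    linarith
  -- differentiability facts for χ
  have hχd1 : DifferentiableAt ℝ χ 0 := hχ.differentiableAt two_ne_zero
  have hχ'at : HasDerivAt χ 0 0 := by
    simpa [hχ'0] using hχd1.hasDerivAt
  have hχderiv : DifferentiableAt ℝ (deriv χ) 0 := by
    have h1 : ContDiffAt ℝ 1 (fderiv ℝ χ) 0 := hχ.fderiv_right (m := 1) le_rfl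
    have h2 : DifferentiableAt ℝ (fun s => fderiv ℝ χ s 1) 0 :=
      (h1.differentiableAt one_ne_zero).clm_apply (differentiableAt_const 1)
    exact h2
  have hχ''at : HasDerivAt (deriv χ) k 0 := hχderiv.hasDerivAt
  -- curve derivative at 0
  have hcurve : HasDerivAt (fun s => ((χ s, s) : ℝ × ℝ)) ((0 : ℝ), (1 : ℝ)) 0 :=
    hχ'at.prodMk (hasDerivAt_id 0)
  -- composite partial derivative facts
  have Hp1 : HasDerivAt (fun s => pd1 up (χ s, s)) (pd2 (pd1 up) (0, 0)) 0 :=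
    pd_comp_hasDerivAt up hup χ hχ0 hχ'at (1, 0)
  have Hp2 : HasDerivAt (fun s => pd2 up (χ s, s)) (pd2 (pd2 up) (0, 0)) 0 :=
    pd_comp_hasDerivAt up hup χ hχ0 hχ'at (0, 1)
  have Hm1 : HasDerivAt (fun s => pd1 um (χ s, s)) (pd2 (pd1 um) (0, 0)) 0 :=
    pd_comp_hasDerivAt um hum χ hχ0 hχ'at (1, 0)
  have Hm2 : HasDerivAt (fun s => pd2 um (χ s, s)) (pd2 (pd2 um) (0, 0)) 0 :=
    pd_comp_hasDerivAt um hum χ hχ0 hχ'at (0, 1)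
  -- F1 : value of v at 0
  have E1 : v 0 = a11p * pd1 up (0, 0) + a12p * pd2 up (0, 0)
      - a11m * pd1 um (0, 0) - a12m * pd2 um (0, 0) := by
    have h := hv 0
    rw [hχ'0, hχ0] at h
    simp only [ne_eq, OfNat.ofNat_ne_zero, not_false_eq_true, zero_pow, add_zero,
      Real.sqrt_one, one_mul, zero_mul, sub_zero] at h
    linarith
  -- F2 : value of w at 0
  have E2 : w 0 = up (0, 0) - um (0, 0) := by
    rw [hw]; simp [hχ0]
  -- F3 : first derivative of w at 0
  have hupd : DifferentiableAt ℝ up (0, 0) := hup.differentiableAt two_ne_zero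
  have humd : DifferentiableAt ℝ um (0, 0) := hum.differentiableAt two_ne_zero
  have hwder : HasDerivAt w (pd2 up (0, 0) - pd2 um (0, 0)) 0 := by
    rw [hw]
    have h1 : HasDerivAt (fun s => up (χ s, s)) (pd2 up (0, 0)) 0 :=
      hupd.hasFDerivAt.comp_hasDerivAt_of_eq 0 hcurve (by simp [hχ0])
    have h2 : HasDerivAt (fun s => um (χ s, s)) (pd2 um (0, 0)) 0 :=
      humd.hasFDerivAt.comp_hasDerivAt_of_eq 0 hcurve (by simp [hχ0])
    exact h1.sub h2
  have E3 : deriv w 0 = pd2 up (0, 0) - pd2 um (0, 0) := hwder.deriv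
  -- eventual formula for deriv w
  have hχev : ∀ᶠ s in 𝓝 (0:ℝ), DifferentiableAt ℝ χ s :=
    (hχ.eventually (by norm_num)).mono fun s h => h.differentiableAt two_ne_zero
  have hcont : Filter.Tendsto (fun s => ((χ s, s) : ℝ × ℝ)) (𝓝 0) (𝓝 (0, 0)) := by
    have := (hχd1.continuousAt.prodMk continuousAt_id : ContinuousAt (fun s => ((χ s, s) : ℝ × ℝ)) 0)
    simpa [ContinuousAt, hχ0] using this
  have hupev : ∀ᶠ p in 𝓝 ((0:ℝ), (0:ℝ)), DifferentiableAt ℝ up p :=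
    (hup.eventually (by norm_num)).mono fun p h => h.differentiableAt two_ne_zero
  have humev : ∀ᶠ p in 𝓝 ((0:ℝ), (0:ℝ)), DifferentiableAt ℝ um p :=
    (hum.eventually (by norm_num)).mono fun p h => h.differentiableAt two_ne_zero
  have hev : ∀ᶠ s in 𝓝 (0:ℝ), deriv w s =
      deriv χ s * pd1 up (χ s, s) + pd2 up (χ s, s)
        - (deriv χ s * pd1 um (χ s, s) + pd2 um (χ s, s)) := by
    filter_upwards [hχev, hcont.eventually hupev, hcont.eventually humev] with s hχs hups hums
    have hcs : HasDerivAt (fun t => ((χ t, t) : ℝ × ℝ)) ((deriv χ s : ℝ), (1 : ℝ)) s :=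
      hχs.hasDerivAt.prodMk (hasDerivAt_id s)
    have h1 : HasDerivAt (fun t => up (χ t, t)) (fderiv ℝ up (χ s, s) (deriv χ s, 1)) s :=
      hups.hasFDerivAt.comp_hasDerivAt_of_eq s hcs rfl
    have h2 : HasDerivAt (fun t => um (χ t, t)) (fderiv ℝ um (χ s, s) (deriv χ s, 1)) s :=
      hums.hasFDerivAt.comp_hasDerivAt_of_eq s hcs rfl
    have h3 : HasDerivAt w
        (fderiv ℝ up (χ s, s) (deriv χ s, 1) - fderiv ℝ um (χ s, s) (deriv χ s, 1)) s := by
      rw [hw]; exact h1.sub h2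
    have hvec : ((deriv χ s, 1) : ℝ × ℝ) = deriv χ s • ((1:ℝ), (0:ℝ)) + ((0:ℝ), (1:ℝ)) := by
      simp [Prod.ext_iff]
    have e1 : (fderiv ℝ up (χ s, s)) ((deriv χ s, 1) : ℝ × ℝ)
        = deriv χ s * pd1 up (χ s, s) + pd2 up (χ s, s) := by
      rw [hvec, map_add, _root_.map_smul]; simp [pd1, pd2, smul_eq_mul]
    have e2 : (fderiv ℝ um (χ s, s)) ((deriv χ s, 1) : ℝ × ℝ)
        = deriv χ s * pd1 um (χ s, s) + pd2 um (χ s, s) := by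
      rw [hvec, map_add, _root_.map_smul]; simp [pd1, pd2, smul_eq_mul]
    rw [h3.deriv, e1, e2]
  -- F4 : second derivative of w at 0
  have E4 : deriv (deriv w) 0 =
      k * (pd1 up (0, 0) - pd1 um (0, 0)) + pd2 (pd2 up) (0, 0) - pd2 (pd2 um) (0, 0) := by
    have heq : deriv (deriv w) 0 = deriv (fun s =>
        deriv χ s * pd1 up (χ s, s) + pd2 up (χ s, s)
          - (deriv χ s * pd1 um (χ s, s) + pd2 um (χ s, s))) 0 :=
      Filter.EventuallyEq.deriv_eq hev
    have hfor : HasDerivAt (fun s =>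
        deriv χ s * pd1 up (χ s, s) + pd2 up (χ s, s)
          - (deriv χ s * pd1 um (χ s, s) + pd2 um (χ s, s)))
        ((k * pd1 up (χ 0, 0) + deriv χ 0 * pd2 (pd1 up) (0, 0)) + pd2 (pd2 up) (0, 0)
          - ((k * pd1 um (χ 0, 0) + deriv χ 0 * pd2 (pd1 um) (0, 0)) + pd2 (pd2 um) (0, 0))) 0 :=
      (((hχ''at.mul Hp1).add Hp2).sub ((hχ''at.mul Hm1).add Hm2))
    rw [heq, hfor.deriv, hχ'0, hχ0]
    ring
  -- F5 : derivative of v at 0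
  have hsq : HasDerivAt (fun s => Real.sqrt (1 + deriv χ s ^ 2)) 0 0 := by
    have hin : HasDerivAt (fun s => 1 + deriv χ s ^ 2) (2 * deriv χ 0 ^ 1 * k) 0 :=
      (hχ''at.pow 2).const_add 1
    have hout := (Real.hasDerivAt_sqrt (by norm_num [hχ'0] : (1:ℝ) + deriv χ 0 ^ 2 ≠ 0)).comp 0 hin
    exact hout.congr_deriv (by simp [hχ'0])
  have hL : HasDerivAt (fun s => Real.sqrt (1 + deriv χ s ^ 2) * v s) (deriv v 0) 0 := by
    have := hsq.mul hv1.hasDerivAt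
    exact this.congr_deriv (by simp [hχ'0])
  have hcoefp1 : HasDerivAt (fun s => a11p - deriv χ s * a12p) (-(k * a12p)) 0 := by
    simpa using (hχ''at.mul_const a12p).const_sub a11p
  have hcoefm1 : HasDerivAt (fun s => a11m - deriv χ s * a12m) (-(k * a12m)) 0 := by
    simpa using (hχ''at.mul_const a12m).const_sub a11m
  have hcoefp2 : HasDerivAt (fun s => a12p - deriv χ s * a22p) (-(k * a22p)) 0 := by
    simpa using (hχ''at.mul_const a22p).const_sub a12p
  have hcoefm2 : HasDerivAt (fun s => a12m - deriv χ s * a22m) (-(k * a22m)) 0 := by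
    simpa using (hχ''at.mul_const a22m).const_sub a12m
  have hR : HasDerivAt (fun s =>
      ((a11p - deriv χ s * a12p) * pd1 up (χ s, s)
          - (a11m - deriv χ s * a12m) * pd1 um (χ s, s))
        + ((a12p - deriv χ s * a22p) * pd2 up (χ s, s)
          - (a12m - deriv χ s * a22m) * pd2 um (χ s, s)))
      (((-(k * a12p)) * pd1 up (χ 0, 0) + (a11p - deriv χ 0 * a12p) * pd2 (pd1 up) (0, 0)
          - ((-(k * a12m)) * pd1 um (χ 0, 0) + (a11m - deriv χ 0 * a12m) * pd2 (pd1 um) (0, 0)))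
        + ((-(k * a22p)) * pd2 up (χ 0, 0) + (a12p - deriv χ 0 * a22p) * pd2 (pd2 up) (0, 0)
          - ((-(k * a22m)) * pd2 um (χ 0, 0) + (a12m - deriv χ 0 * a22m) * pd2 (pd2 um) (0, 0)))) 0 :=
    (((hcoefp1.mul Hp1).sub (hcoefm1.mul Hm1)).add ((hcoefp2.mul Hp2).sub (hcoefm2.mul Hm2)))
  have hLR : HasDerivAt (fun s => Real.sqrt (1 + deriv χ s ^ 2) * v s)
      (((-(k * a12p)) * pd1 up (χ 0, 0) + (a11p - deriv χ 0 * a12p) * pd2 (pd1 up) (0, 0)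
          - ((-(k * a12m)) * pd1 um (χ 0, 0) + (a11m - deriv χ 0 * a12m) * pd2 (pd1 um) (0, 0)))
        + ((-(k * a22p)) * pd2 up (χ 0, 0) + (a12p - deriv χ 0 * a22p) * pd2 (pd2 up) (0, 0)
          - ((-(k * a22m)) * pd2 um (χ 0, 0) + (a12m - deriv χ 0 * a22m) * pd2 (pd2 um) (0, 0)))) 0 := by
    have hfun : (fun s => Real.sqrt (1 + deriv χ s ^ 2) * v s) = (fun s =>
      ((a11p - deriv χ s * a12p) * pd1 up (χ s, s)
          - (a11m - deriv χ s * a12m) * pd1 um (χ s, s))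
        + ((a12p - deriv χ s * a22p) * pd2 up (χ s, s)
          - (a12m - deriv χ s * a22m) * pd2 um (χ s, s))) := funext hv
    rw [hfun]; exact hR
  have E5 : deriv v 0 =
      (-(k * a12p) * pd1 up (0, 0) + a11p * pd2 (pd1 up) (0, 0)
        - k * a22p * pd2 up (0, 0) + a12p * pd2 (pd2 up) (0, 0))
      - (-(k * a12m) * pd1 um (0, 0) + a11m * pd2 (pd1 um) (0, 0)
        - k * a22m * pd2 um (0, 0) + a12m * pd2 (pd2 um) (0, 0)) := by
    have := hL.unique hLR
    rw [this, hχ'0, hχ0]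
    ring
  -- conclusion by pure algebra
  exact stmt11_alg a11p a12p a22p a11m a12m a22m σp σm fp fm k
    (pd1 up (0,0)) (pd2 up (0,0)) (up (0,0)) (pd1 (pd1 up) (0,0)) (pd2 (pd1 up) (0,0))
    (pd2 (pd2 up) (0,0))
    (pd1 um (0,0)) (pd2 um (0,0)) (um (0,0)) (pd1 (pd1 um) (0,0)) (pd2 (pd1 um) (0,0))
    (pd2 (pd2 um) (0,0))
    (w 0) (deriv w 0) (deriv (deriv w) 0) (v 0) (deriv v 0)
    ha (by linarith [E1]) E2 (by linarith [E3]) (by linarith [E4])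
    (by linarith [E5]) hpdep hpdem
end

section
/- Consider an interface parameterized in local (ξ,η) coordinates as Γ = {(χ(s), s)} with χ twice continuously differentiable, χ(0) = 0, χ'(0) = 0, χ'' := χ''(0). Let u⁺, u⁻ be C², let a_ij±(ξ,η) be C¹ symmetric positive-definite variable coefficients on each side with a₁₁⁺ > 0 at the origin, let w(s) := [u](s) be C² and let v(s) be the flux jump defined by √(1 + χ'(s)²) v(s) = [(a₁₁ − χ' a₁₂) u_ξ](s) + [(a₁₂ − χ' a₂₂) u_η](s), assumed C¹. Define c₃± = ∂a₁₁±/∂η − χ'' a₁₂± and c₄± = ∂a₁₂±/∂η − χ'' a₂₂±, with everything evaluated one-sidedly at the origin, and [g] := g⁺ − g⁻ there. Then u_ξη⁺ = ((c₃⁻[a₁₁] − a₁₁⁻[c₃] − χ'' a₁₂⁺[a₁₁])/(a₁₁⁺)²) u_ξ⁻ + ((c₃⁺[a₁₂] − a₁₁⁺[c₄] − χ'' a₁₂⁺[a₁₂])/(a₁₁⁺)²) u_η⁻ − ([a₁₂]/a₁₁⁺) u_ηη⁻ + (a₁₁⁻/a₁₁⁺) u_ξη⁻ + ((c₃⁺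 a₁₂⁺ − a₁₁⁺ c₄⁺ − χ'' (a₁₂⁺)²)/(a₁₁⁺)²) w'(0) − (a₁₂⁺/a₁₁⁺) w''(0) + ((χ'' a₁₂⁺ − c₃⁺)/(a₁₁⁺)²) v(0) + v'(0)/a₁₁⁺. -/
open Real Filter Topology

/-! Along the interface `Γ = {(χ(s), s)}` every quantity is differentiated by the chain rule
`d/ds f(χ(s), s) = χ'(s) f_ξ + f_η`, which at the origin reduces to `f_η` since `χ'(0) = 0`.
Differentiating `w = [u]` twice and the flux relation once therefore expresses `w'(0)`, `w''(0)`,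
`v(0)` and `v'(0)` (the square-root factor has value `1` and derivative `0` there) through the
one-sided first and second derivatives of `u±`. These are four equations, linear in
`u_ξ⁺, u_η⁺, u_ηη⁺, u_ξη⁺`; solving them for `u_ξη⁺` (possible as `a₁₁⁺ ≠ 0`) gives the relation. -/

theorem pd1_sub {f g : ℝ × ℝ → ℝ} {p : ℝ × ℝ} (hf : DifferentiableAt ℝ f p)
    (hg : DifferentiableAt ℝ g p) : pd1 (f - g) p = pd1 f p - pd1 g p := by
  simp only [pd1, fderiv_sub hf hg, _root_.sub_apply]

theorem pd2_sub {f g : ℝ × ℝ → ℝ} {p : ℝ × ℝ} (hf : DifferentiableAt ℝ f p)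
    (hg : DifferentiableAt ℝ g p) : pd2 (f - g) p = pd2 f p - pd2 g p := by
  simp only [pd2, fderiv_sub hf hg, _root_.sub_apply]

theorem ContDiff.differentiable_pd1 {u : ℝ × ℝ → ℝ} (hu : ContDiff ℝ 2 u) :
    Differentiable ℝ (pd1 u) :=
  ((hu.fderiv_right (m := 1) le_rfl).clm_apply contDiff_const).differentiable one_ne_zero

theorem ContDiff.differentiable_pd2 {u : ℝ × ℝ → ℝ} (hu : ContDiff ℝ 2 u) :
    Differentiable ℝ (pd2 u) :=
  ((hu.fderiv_right (m := 1) le_rfl).clm_apply contDiff_const).differentiable one_ne_zero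

theorem ContDiffAt.differentiableAt_deriv {χ : ℝ → ℝ} {s : ℝ} (hχ : ContDiffAt ℝ 2 χ s) :
    DifferentiableAt ℝ (deriv χ) s :=
  (hχ.derivWithin (m := 1) le_rfl).differentiableAt one_ne_zero

section Graph

variable {χ : ℝ → ℝ} {f : ℝ × ℝ → ℝ}

theorem hasDerivAt_comp_graph {s : ℝ} (hf : DifferentiableAt ℝ f (χ s, s))
    (hχ : DifferentiableAt ℝ χ s) :
    HasDerivAt (fun t => f (χ t, t)) (deriv χ s * pd1 f (χ s, s) + pd2 f (χ s, s)) s := by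
  have hchain := HasFDerivAt.comp_hasDerivAt (f := fun t => (χ t, t)) s hf.hasFDerivAt
    (hχ.hasDerivAt.prodMk (hasDerivAt_id s))
  refine hchain.congr_deriv ?_
  have hsplit : ((deriv χ s, 1) : ℝ × ℝ) = deriv χ s • ((1, 0) : ℝ × ℝ) + (0, 1) := by simp
  rw [hsplit, map_add, map_smul, smul_eq_mul, pd1, pd2]

theorem deriv_comp_graph_eventuallyEq {s₀ : ℝ} (hf : Differentiable ℝ f)
    (hχ : ∀ᶠ s in 𝓝 s₀, DifferentiableAt ℝ χ s) :
    deriv (fun t => f (χ t, t)) =ᶠ[𝓝 s₀]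
      fun s => deriv χ s * pd1 f (χ s, s) + pd2 f (χ s, s) := by
  filter_upwards [hχ] with s hs
  exact (hasDerivAt_comp_graph (hf _) hs).deriv

theorem hasDerivAt_comp_graph_zero (hχ0 : χ 0 = 0) (hχ'0 : deriv χ 0 = 0)
    (hf : DifferentiableAt ℝ f (0, 0)) (hχ : DifferentiableAt ℝ χ 0) :
    HasDerivAt (fun t => f (χ t, t)) (pd2 f (0, 0)) 0 := by
  simpa [hχ0, hχ'0] using hasDerivAt_comp_graph (f := f) (by rwa [hχ0]) hχ

theorem hasDerivAt_deriv_comp_graph_zero (hχ0 : χ 0 = 0) (hχ'0 : deriv χ 0 = 0)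
    (hf : ContDiff ℝ 2 f) (hχ : ContDiffAt ℝ 2 χ 0) :
    HasDerivAt (deriv fun t => f (χ t, t))
      (deriv (deriv χ) 0 * pd1 f (0, 0) + pd2 (pd2 f) (0, 0)) 0 := by
  have hχd : ∀ᶠ s in 𝓝 0, DifferentiableAt ℝ χ s :=
    (hχ.eventually (by simp)).mono fun s hs => hs.differentiableAt two_ne_zero
  have hf1 := hasDerivAt_comp_graph_zero hχ0 hχ'0 (hf.differentiable_pd1 _) hχd.self_of_nhds
  have hf2 := hasDerivAt_comp_graph_zero hχ0 hχ'0 (hf.differentiable_pd2 _) hχd.self_of_nhds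
  have hmain := (hχ.differentiableAt_deriv.hasDerivAt.mul hf1).add hf2
  rw [hχ'0, zero_mul, add_zero, hχ0] at hmain
  exact hmain.congr_of_eventuallyEq
    (deriv_comp_graph_eventuallyEq (hf.differentiable two_ne_zero) hχd)

theorem hasDerivAt_deriv_comp_graph_sub_zero {g : ℝ × ℝ → ℝ} (hχ0 : χ 0 = 0)
    (hχ'0 : deriv χ 0 = 0) (hf : ContDiff ℝ 2 f) (hg : ContDiff ℝ 2 g) (hχ : ContDiffAt ℝ 2 χ 0) :
    HasDerivAt (deriv fun t => f (χ t, t) - g (χ t, t))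
      (deriv (deriv χ) 0 * (pd1 f (0, 0) - pd1 g (0, 0))
        + (pd2 (pd2 f) (0, 0) - pd2 (pd2 g) (0, 0))) 0 := by
  have hdf := hf.differentiable two_ne_zero
  have hdg := hg.differentiable two_ne_zero
  have hpd2 : pd2 (f - g) = pd2 f - pd2 g := funext fun p => pd2_sub (hdf p) (hdg p)
  rw [← pd1_sub (hdf _) (hdg _), ← pd2_sub (hf.differentiable_pd2 _) (hg.differentiable_pd2 _),
    ← hpd2]
  exact hasDerivAt_deriv_comp_graph_zero hχ0 hχ'0 (hf.sub hg) hχ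

end Graph

section Flux

/-- `√(1 + χ'²) (a∇u · n)` on the graph `ξ = χ(η)`, where `n = (1, -χ') / √(1 + χ'²)`. -/
noncomputable def graphFlux (χ : ℝ → ℝ) (a11 a12 a22 u : ℝ × ℝ → ℝ) (s : ℝ) : ℝ :=
  (a11 (χ s, s) - deriv χ s * a12 (χ s, s)) * pd1 u (χ s, s)
    + (a12 (χ s, s) - deriv χ s * a22 (χ s, s)) * pd2 u (χ s, s)

variable {χ : ℝ → ℝ} {a11 a12 a22 u : ℝ × ℝ → ℝ}

theorem graphFlux_zero (hχ0 : χ 0 = 0) (hχ'0 : deriv χ 0 = 0) :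
    graphFlux χ a11 a12 a22 u 0 = a11 (0, 0) * pd1 u (0, 0) + a12 (0, 0) * pd2 u (0, 0) := by
  simp [graphFlux, hχ0, hχ'0]

theorem hasDerivAt_graphFlux_zero (hχ0 : χ 0 = 0) (hχ'0 : deriv χ 0 = 0)
    (hχ : ContDiffAt ℝ 2 χ 0) (ha11 : DifferentiableAt ℝ a11 (0, 0))
    (ha12 : DifferentiableAt ℝ a12 (0, 0)) (ha22 : DifferentiableAt ℝ a22 (0, 0))
    (hu1 : DifferentiableAt ℝ (pd1 u) (0, 0)) (hu2 : DifferentiableAt ℝ (pd2 u) (0, 0)) :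
    HasDerivAt (graphFlux χ a11 a12 a22 u)
      ((pd2 a11 (0, 0) - deriv (deriv χ) 0 * a12 (0, 0)) * pd1 u (0, 0)
        + a11 (0, 0) * pd2 (pd1 u) (0, 0)
        + (pd2 a12 (0, 0) - deriv (deriv χ) 0 * a22 (0, 0)) * pd2 u (0, 0)
        + a12 (0, 0) * pd2 (pd2 u) (0, 0)) 0 := by
  have hχd := hχ.differentiableAt two_ne_zero
  have hχ' := hχ.differentiableAt_deriv.hasDerivAt
  have along {g : ℝ × ℝ → ℝ} (hg : DifferentiableAt ℝ g (0, 0)) :=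
    hasDerivAt_comp_graph_zero hχ0 hχ'0 hg hχd
  have h := (((along ha11).sub (hχ'.mul (along ha12))).mul (along hu1)).add
    (((along ha12).sub (hχ'.mul (along ha22))).mul (along hu2))
  refine h.congr_deriv ?_
  simp only [hχ0, hχ'0, Pi.sub_apply, Pi.mul_apply]
  ring

end Flux

theorem deriv_eq_of_mul_eq {φ v F : ℝ → ℝ} {x F' : ℝ} (hvF : ∀ s, φ s * v s = F s)
    (hφ : HasDerivAt φ 0 x) (hφx : φ x = 1) (hv : DifferentiableAt ℝ v x)
    (hF : HasDerivAt F F' x) : deriv v x = F' := by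
  have h := (hφ.mul hv.hasDerivAt).congr_of_eventuallyEq
    (Eventually.of_forall fun s => (hvF s).symm)
  rw [hφx, zero_mul, zero_add, one_mul] at h
  exact h.unique hF

theorem hasDerivAt_sqrt_one_add_sq {g : ℝ → ℝ} {x g' : ℝ} (hg : HasDerivAt g g' x)
    (hgx : g x = 0) : HasDerivAt (fun s => √(1 + g s ^ 2)) 0 x := by
  have h := ((hg.pow 2).const_add 1).sqrt (by simp [hgx])
  simpa [hgx] using h

theorem stmt_13_general (χ : ℝ → ℝ) (hχ : ContDiffAt ℝ 2 χ 0)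
    (hχ0 : χ 0 = 0) (hχ'0 : deriv χ 0 = 0)
    (up um : ℝ × ℝ → ℝ) (hup : ContDiff ℝ 2 up) (hum : ContDiff ℝ 2 um)
    (a11p a12p a22p a11m a12m a22m : ℝ × ℝ → ℝ)
    (ha11p : ContDiff ℝ 1 a11p) (ha12p : ContDiff ℝ 1 a12p) (ha22p : ContDiff ℝ 1 a22p)
    (ha11m : ContDiff ℝ 1 a11m) (ha12m : ContDiff ℝ 1 a12m) (ha22m : ContDiff ℝ 1 a22m)
    (ha0 : 0 < a11p (0, 0))
    (w : ℝ → ℝ) (hw : w = fun s => up (χ s, s) - um (χ s, s))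
    (v : ℝ → ℝ)
    (hv : ∀ s : ℝ, Real.sqrt (1 + deriv χ s ^ 2) * v s =
      ((a11p (χ s, s) - deriv χ s * a12p (χ s, s)) * pd1 up (χ s, s)
          - (a11m (χ s, s) - deriv χ s * a12m (χ s, s)) * pd1 um (χ s, s))
        + ((a12p (χ s, s) - deriv χ s * a22p (χ s, s)) * pd2 up (χ s, s)
          - (a12m (χ s, s) - deriv χ s * a22m (χ s, s)) * pd2 um (χ s, s)))
    (hvC1 : ContDiffAt ℝ 1 v 0)
    (c3p c3m c4p c4m : ℝ)
    (hc3p : c3p = pd2 a11p (0, 0) - deriv (deriv χ) 0 * a12p (0, 0))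
    (hc3m : c3m = pd2 a11m (0, 0) - deriv (deriv χ) 0 * a12m (0, 0))
    (hc4p : c4p = pd2 a12p (0, 0) - deriv (deriv χ) 0 * a22p (0, 0))
    (hc4m : c4m = pd2 a12m (0, 0) - deriv (deriv χ) 0 * a22m (0, 0)) :
    pd2 (pd1 up) (0, 0) =
      ((c3m * (a11p (0, 0) - a11m (0, 0)) - a11m (0, 0) * (c3p - c3m)
          - deriv (deriv χ) 0 * a12p (0, 0) * (a11p (0, 0) - a11m (0, 0)))
        / a11p (0, 0) ^ 2) * pd1 um (0, 0)
      + ((c3p * (a12p (0, 0) - a12m (0, 0)) - a11p (0, 0) * (c4p - c4m)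
          - deriv (deriv χ) 0 * a12p (0, 0) * (a12p (0, 0) - a12m (0, 0)))
        / a11p (0, 0) ^ 2) * pd2 um (0, 0)
      - ((a12p (0, 0) - a12m (0, 0)) / a11p (0, 0)) * pd2 (pd2 um) (0, 0)
      + (a11m (0, 0) / a11p (0, 0)) * pd2 (pd1 um) (0, 0)
      + ((c3p * a12p (0, 0) - a11p (0, 0) * c4p
          - deriv (deriv χ) 0 * a12p (0, 0) ^ 2) / a11p (0, 0) ^ 2) * deriv w 0
      - (a12p (0, 0) / a11p (0, 0)) * deriv (deriv w) 0
      + ((deriv (deriv χ) 0 * a12p (0, 0) - c3p) / a11p (0, 0) ^ 2) * v 0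
      + deriv v 0 / a11p (0, 0) := by
  have hjump : ∀ s, √(1 + deriv χ s ^ 2) * v s =
      graphFlux χ a11p a12p a22p up s - graphFlux χ a11m a12m a22m um s := fun s => by
    rw [hv s, graphFlux, graphFlux]
    ring
  have hv0 : v 0 = a11p (0, 0) * pd1 up (0, 0) + a12p (0, 0) * pd2 up (0, 0)
      - (a11m (0, 0) * pd1 um (0, 0) + a12m (0, 0) * pd2 um (0, 0)) := by
    simpa [hχ'0, graphFlux_zero hχ0 hχ'0] using hjump 0
  have hflux {a11 a12 a22 u : ℝ × ℝ → ℝ} (h11 : ContDiff ℝ 1 a11) (h12 : ContDiff ℝ 1 a12)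
      (h22 : ContDiff ℝ 1 a22) (hu : ContDiff ℝ 2 u) :=
    hasDerivAt_graphFlux_zero hχ0 hχ'0 hχ (h11.differentiable one_ne_zero _)
      (h12.differentiable one_ne_zero _) (h22.differentiable one_ne_zero _)
      (hu.differentiable_pd1 _) (hu.differentiable_pd2 _)
  have hv1 := deriv_eq_of_mul_eq hjump
    (hasDerivAt_sqrt_one_add_sq hχ.differentiableAt_deriv.hasDerivAt hχ'0) (by simp [hχ'0])
    (hvC1.differentiableAt one_ne_zero)
    ((hflux ha11p ha12p ha22p hup).sub (hflux ha11m ha12m ha22m hum))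
  have hw1 : deriv w 0 = pd2 up (0, 0) - pd2 um (0, 0) := by
    have hχd := hχ.differentiableAt two_ne_zero
    rw [hw]
    exact ((hasDerivAt_comp_graph_zero hχ0 hχ'0 (hup.differentiable two_ne_zero _) hχd).sub
      (hasDerivAt_comp_graph_zero hχ0 hχ'0 (hum.differentiable two_ne_zero _) hχd)).deriv
  rw [hw1, hv0, hv1, hw, (hasDerivAt_deriv_comp_graph_sub_zero hχ0 hχ'0 hup hum hχ).deriv,
    hc3p, hc3m, hc4p, hc4m]
  field_simp [ha0.ne']
  ring

/-- the variable-coefficient interface relation for the mixed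
second derivative `u_ξη⁺` at the origin, with the tangential derivatives of
the coefficients entering through `c₃ = ∂a₁₁/∂η − χ'' a₁₂` and
`c₄ = ∂a₁₂/∂η − χ'' a₂₂`. -/
theorem stmt_13 (χ : ℝ → ℝ) (hχ : ContDiffAt ℝ 2 χ 0)
    (hχ0 : χ 0 = 0) (hχ'0 : deriv χ 0 = 0)
    (up um : ℝ × ℝ → ℝ) (hup : ContDiff ℝ 2 up) (hum : ContDiff ℝ 2 um)
    (a11p a12p a22p a11m a12m a22m : ℝ × ℝ → ℝ)
    (ha11p : ContDiff ℝ 1 a11p) (ha12p : ContDiff ℝ 1 a12p) (ha22p : ContDiff ℝ 1 a22p)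
    (ha11m : ContDiff ℝ 1 a11m) (ha12m : ContDiff ℝ 1 a12m) (ha22m : ContDiff ℝ 1 a22m)
    (hposp : ∀ p : ℝ × ℝ,
      (!![a11p p, a12p p; a12p p, a22p p] : Matrix (Fin 2) (Fin 2) ℝ).PosDef)
    (hposm : ∀ p : ℝ × ℝ,
      (!![a11m p, a12m p; a12m p, a22m p] : Matrix (Fin 2) (Fin 2) ℝ).PosDef)
    (ha0 : 0 < a11p (0, 0))
    (w : ℝ → ℝ) (hw : w = fun s => up (χ s, s) - um (χ s, s))
    (hwC2 : ContDiffAt ℝ 2 w 0)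
    (v : ℝ → ℝ)
    (hv : ∀ s : ℝ, Real.sqrt (1 + deriv χ s ^ 2) * v s =
      ((a11p (χ s, s) - deriv χ s * a12p (χ s, s)) * pd1 up (χ s, s)
          - (a11m (χ s, s) - deriv χ s * a12m (χ s, s)) * pd1 um (χ s, s))
        + ((a12p (χ s, s) - deriv χ s * a22p (χ s, s)) * pd2 up (χ s, s)
          - (a12m (χ s, s) - deriv χ s * a22m (χ s, s)) * pd2 um (χ s, s)))
    (hvC1 : ContDiffAt ℝ 1 v 0)
    (c3p c3m c4p c4m : ℝ)
    (hc3p : c3p = pd2 a11p (0, 0) - deriv (deriv χ) 0 * a12p (0, 0))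
    (hc3m : c3m = pd2 a11m (0, 0) - deriv (deriv χ) 0 * a12m (0, 0))
    (hc4p : c4p = pd2 a12p (0, 0) - deriv (deriv χ) 0 * a22p (0, 0))
    (hc4m : c4m = pd2 a12m (0, 0) - deriv (deriv χ) 0 * a22m (0, 0)) :
    pd2 (pd1 up) (0, 0) =
      ((c3m * (a11p (0, 0) - a11m (0, 0)) - a11m (0, 0) * (c3p - c3m)
          - deriv (deriv χ) 0 * a12p (0, 0) * (a11p (0, 0) - a11m (0, 0)))
        / a11p (0, 0) ^ 2) * pd1 um (0, 0)
      + ((c3p * (a12p (0, 0) - a12m (0, 0)) - a11p (0, 0) * (c4p - c4m)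
          - deriv (deriv χ) 0 * a12p (0, 0) * (a12p (0, 0) - a12m (0, 0)))
        / a11p (0, 0) ^ 2) * pd2 um (0, 0)
      - ((a12p (0, 0) - a12m (0, 0)) / a11p (0, 0)) * pd2 (pd2 um) (0, 0)
      + (a11m (0, 0) / a11p (0, 0)) * pd2 (pd1 um) (0, 0)
      + ((c3p * a12p (0, 0) - a11p (0, 0) * c4p
          - deriv (deriv χ) 0 * a12p (0, 0) ^ 2) / a11p (0, 0) ^ 2) * deriv w 0
      - (a12p (0, 0) / a11p (0, 0)) * deriv (deriv w) 0
      + ((deriv (deriv χ) 0 * a12p (0, 0) - c3p) / a11p (0, 0) ^ 2) * v 0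
      + deriv v 0 / a11p (0, 0) :=
  stmt_13_general χ hχ hχ0 hχ'0 up um hup hum a11p a12p a22p a11m a12m a22m ha11p ha12p ha22p ha11m
    ha12m ha22m ha0 w hw v hv hvC1 c3p c3m c4p c4m hc3p hc3m hc4p hc4m
end
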